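/- arXiv:2404.18337 — 2 statements merged into one kernel-verified Lean document; each statement's English description precedes it below -/
import Mathlib

section
/- Let r be a positive integer, W = {(x, y, x²+y²) : x, y ∈ [r/2, r] ∩ ℤ}, W₁ = {(x, 0, x²) : x ∈ [r/2, r] ∩ ℤ}, W₂ = {(0, y, y²) : y ∈ [r/2, r] ∩ ℤ}, and W' = W ∪ (-W) ∪ (W₁ - W₂) ∪ (W₂ - W₁). Then for every w = (x, y, x²+y²) ∈ W, setting c = (2x, 2y, -1), the vector w is the unique maximizer in W' of the inner product ⟨c, ·⟩; in particular w is an extreme point of the convex hull of W'. -/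
/-!
Under `c = (2x, 2y, -1)` the lifted point `(a, b, a² + b²)` scores `x² + y² - (x - a)² - (y - b)²`,
so `w` strictly beats the rest of `W`. The other three pieces of `W'` score `±g ± h` with
`g = x² - (x - a)²`, `h = y² - (y - b)²`, at least one sign negative; since all coordinates lie in
`[r/2, r]`, `0 ≤ g ≤ x²` and `0 ≤ h ≤ y²`, and `x, y > 0` make these scores fall short of `x² + y²`.
A strict maximiser `w` over `s` of a convex function `f` is an extreme point of `convexHull s`:
`insert w {z | f z < f w}` is convex, contains `s`, and has `w` as an extreme point.
-/

open Pointwise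

noncomputable def dot3 (u v : ℝ × ℝ × ℝ) : ℝ :=
  u.1 * v.1 + u.2.1 * v.2.1 + u.2.2 * v.2.2

def setW1 (r : ℕ) : Set (ℝ × ℝ × ℝ) :=
  {w | ∃ x : ℤ, (r : ℤ) ≤ 2 * x ∧ x ≤ r ∧ w = ((x : ℝ), 0, (x : ℝ) ^ 2)}

def setW2 (r : ℕ) : Set (ℝ × ℝ × ℝ) :=
  {w | ∃ y : ℤ, (r : ℤ) ≤ 2 * y ∧ y ≤ r ∧ w = (0, (y : ℝ), (y : ℝ) ^ 2)}

def setW (r : ℕ) : Set (ℝ × ℝ × ℝ) :=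
  {w | ∃ x y : ℤ, (r : ℤ) ≤ 2 * x ∧ x ≤ r ∧ (r : ℤ) ≤ 2 * y ∧ y ≤ r ∧
    w = ((x : ℝ), (y : ℝ), (x : ℝ) ^ 2 + (y : ℝ) ^ 2)}

def setW' (r : ℕ) : Set (ℝ × ℝ × ℝ) :=
  setW r ∪ (-setW r) ∪ (setW1 r - setW2 r) ∪ (setW2 r - setW1 r)

open Set

section StrictMaximizer

variable {𝕜 E : Type*} [Field 𝕜] [LinearOrder 𝕜] [IsStrictOrderedRing 𝕜]
  [AddCommGroup E] [Module 𝕜 E]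

theorem ConvexOn.convex_setOf_lt {f : E → 𝕜} (hf : ConvexOn 𝕜 univ f) (c : 𝕜) :
    Convex 𝕜 {z | f z < c} := by
  simpa using hf.convex_lt c

theorem ConvexOn.convex_insert_sublevel_lt {f : E → 𝕜} (hf : ConvexOn 𝕜 univ f) (w : E) :
    Convex 𝕜 (insert w {z | f z < f w}) := by
  have toward_w : ∀ q, f q < f w → ∀ a b : 𝕜, 0 ≤ a → 0 ≤ b → a + b = 1 →
      a • w + b • q ∈ insert w {z | f z < f w} := by
    intro q hq a b ha hb hab
    rcases hb.eq_or_lt with rfl | hb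
    · left
      rw [add_zero] at hab
      simp [hab]
    · right
      calc f (a • w + b • q) ≤ a * f w + b * f q := hf.2 trivial trivial ha hb.le hab
        _ < a * f w + b * f w := by gcongr
        _ = f w := by rw [← add_mul, hab, one_mul]
  intro p hp q hq a b ha hb hab
  rcases hp with rfl | hp <;> rcases hq with rfl | hq
  · exact Or.inl (Convex.combo_self hab _)
  · exact toward_w q hq a b ha hb hab
  · rw [add_comm] at hab ⊢
    exact toward_w p hp b a hb ha hab
  · exact Or.inr (hf.convex_setOf_lt (f w) hp hq ha hb hab)

theorem mem_extremePoints_convexHull_of_forall_lt {f : E → 𝕜} (hf : ConvexOn 𝕜 univ f)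
    {s : Set E} {w : E} (hw : w ∈ s) (hlt : ∀ u ∈ s, u ≠ w → f u < f w) :
    w ∈ (convexHull 𝕜 s).extremePoints 𝕜 := by
  have hC : Convex 𝕜 (insert w {z | f z < f w}) := hf.convex_insert_sublevel_lt w
  have hsC : s ⊆ insert w {z | f z < f w} := fun u hu => (eq_or_ne u w).imp id (hlt u hu)
  have hwC : w ∈ (insert w {z | f z < f w}).extremePoints 𝕜 := by
    rw [hC.mem_extremePoints_iff_convex_sdiff,
      insert_sdiff_self_of_notMem (s := {z | f z < f w}) (lt_irrefl (f w))]
    exact ⟨mem_insert w _, hf.convex_setOf_lt (f w)⟩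
  exact inter_extremePoints_subset_extremePoints_of_subset (convexHull_min hsC hC)
    ⟨subset_convexHull 𝕜 s hw, hwC⟩

end StrictMaximizer

theorem isLinearMap_dot3 (c : ℝ × ℝ × ℝ) : IsLinearMap ℝ (dot3 c) where
  map_add u v := by simp only [dot3, Prod.fst_add, Prod.snd_add]; ring
  map_smul a u := by simp only [dot3, Prod.smul_fst, Prod.smul_snd, smul_eq_mul]; ring

theorem sub_sq_le_sq_of_halfRange {r : ℕ} {x a : ℤ} (hx : (r : ℤ) ≤ 2 * x)
    (ha : (r : ℤ) ≤ 2 * a) (ha' : a ≤ r) : ((x : ℝ) - a) ^ 2 ≤ (x : ℝ) ^ 2 := by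
  have h0 : (0 : ℝ) ≤ a := by exact_mod_cast (by omega : 0 ≤ a)
  have h2x : (a : ℝ) ≤ 2 * x := by exact_mod_cast (by omega : a ≤ 2 * x)
  nlinarith

theorem sq_pos_of_halfRange {r : ℕ} (hr : 0 < r) {x : ℤ} (hx : (r : ℤ) ≤ 2 * x) :
    0 < (x : ℝ) ^ 2 := by
  have : x ≠ 0 := by omega
  positivity

theorem dot3_lt_of_mem_setW' {r : ℕ} (hr : 0 < r) {x y : ℤ}
    (hx1 : (r : ℤ) ≤ 2 * x) (hy1 : (r : ℤ) ≤ 2 * y) :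
    ∀ u ∈ setW' r, u ≠ ((x : ℝ), (y : ℝ), (x : ℝ) ^ 2 + (y : ℝ) ^ 2) →
      dot3 (2 * (x : ℝ), 2 * (y : ℝ), -1) u <
        dot3 (2 * (x : ℝ), 2 * (y : ℝ), -1) ((x : ℝ), (y : ℝ), (x : ℝ) ^ 2 + (y : ℝ) ^ 2) := by
  have hX := sq_pos_of_halfRange hr hx1
  have hY := sq_pos_of_halfRange hr hy1
  rintro u (((⟨a, b, ha, ha', hb, hb', rfl⟩ | hu) |
    ⟨_, ⟨a, ha, ha', rfl⟩, _, ⟨b, hb, hb', rfl⟩, rfl⟩) |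
    ⟨_, ⟨b, hb, hb', rfl⟩, _, ⟨a, ha, ha', rfl⟩, rfl⟩) hne
  · have hab : (x : ℝ) - a ≠ 0 ∨ (y : ℝ) - b ≠ 0 := by
      contrapose! hne
      rw [sub_eq_zero.mp hne.1, sub_eq_zero.mp hne.2]
    have hgap : 0 < ((x : ℝ) - a) ^ 2 + ((y : ℝ) - b) ^ 2 := by
      rcases hab with h | h
      · exact add_pos_of_pos_of_nonneg (pow_two_pos_of_ne_zero h) (sq_nonneg _)
      · exact add_pos_of_nonneg_of_pos (sq_nonneg _) (pow_two_pos_of_ne_zero h)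
    simp only [dot3]
    nlinarith
  · obtain ⟨a, b, ha, ha', hb, hb', hu⟩ := hu
    rw [← neg_neg u, hu]
    have := sub_sq_le_sq_of_halfRange hx1 ha ha'
    have := sub_sq_le_sq_of_halfRange hy1 hb hb'
    simp only [dot3, Prod.fst_neg, Prod.snd_neg]
    nlinarith
  · have := sub_sq_le_sq_of_halfRange hy1 hb hb'
    simp only [dot3, Prod.fst_sub, Prod.snd_sub]
    nlinarith [sq_nonneg ((x : ℝ) - a)]
  · have := sub_sq_le_sq_of_halfRange hx1 ha ha'
    simp only [dot3, Prod.fst_sub, Prod.snd_sub]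
    nlinarith [sq_nonneg ((y : ℝ) - b)]

/-- Each `w = (x, y, x²+y²) ∈ W` is the unique maximizer of `⟨c, ·⟩` over `W'` with
`c = (2x, 2y, -1)`; in particular `w` is an extreme point of `Conv(W')`. -/
theorem stmt0 (r : ℕ) (hr : 0 < r) (x y : ℤ)
    (hx1 : (r : ℤ) ≤ 2 * x) (hx2 : x ≤ r) (hy1 : (r : ℤ) ≤ 2 * y) (hy2 : y ≤ r) :
    (∀ u ∈ setW' r,
        dot3 (2 * (x : ℝ), 2 * (y : ℝ), -1) u ≤
          dot3 (2 * (x : ℝ), 2 * (y : ℝ), -1)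
            ((x : ℝ), (y : ℝ), (x : ℝ) ^ 2 + (y : ℝ) ^ 2) ∧
        (dot3 (2 * (x : ℝ), 2 * (y : ℝ), -1) u =
            dot3 (2 * (x : ℝ), 2 * (y : ℝ), -1)
              ((x : ℝ), (y : ℝ), (x : ℝ) ^ 2 + (y : ℝ) ^ 2) →
          u = ((x : ℝ), (y : ℝ), (x : ℝ) ^ 2 + (y : ℝ) ^ 2))) ∧
      ((x : ℝ), (y : ℝ), (x : ℝ) ^ 2 + (y : ℝ) ^ 2) ∈
        Set.extremePoints ℝ (convexHull ℝ (setW' r)) := by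
  have hw : ((x : ℝ), (y : ℝ), (x : ℝ) ^ 2 + (y : ℝ) ^ 2) ∈ setW' r :=
    Or.inl (Or.inl (Or.inl ⟨x, y, hx1, hx2, hy1, hy2, rfl⟩))
  have hlt := dot3_lt_of_mem_setW' hr hx1 hy1
  refine ⟨fun u hu => ?_, mem_extremePoints_convexHull_of_forall_lt
    ((isLinearMap_dot3 _).mk'.convexOn convex_univ) hw hlt⟩
  rcases eq_or_ne u ((x : ℝ), (y : ℝ), (x : ℝ) ^ 2 + (y : ℝ) ^ 2) with rfl | hne
  · exact ⟨le_rfl, fun _ => rfl⟩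
  · exact ⟨(hlt u hu hne).le, fun h => absurd h (hlt u hu hne).ne⟩
end

section
/- Suppose w = (x, y, x²+y²) with x, y ∈ [r/2, r] ∩ ℤ, and suppose k·w = v₁ + ... + v_k where each vᵢ lies in W' = W ∪ (-W) ∪ (W₁-W₂) ∪ (W₂-W₁) (with W, W₁, W₂ as in the Coppersmith–Elkin-style construction over integers in [r/2, r]). Then vᵢ = w for every i. -/
/-!
The linear functional `f (a, b, c) = c - 2 x a - 2 y b` measures, up to the constant `x² + y²`,
the height of a point above the tangent plane of the paraboloid `c = a² + b²` at `(x, y)`.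
On `W` this height is `(a - x)² + (b - y)²`, which vanishes only at `w`; on `-W`, `W₁ - W₂` and
`W₂ - W₁` it is strictly positive, because the first and second coordinates of points of `W`
lie in `[0, 2x]` and `[0, 2y]`. So `f` attains its minimum over `W'` exactly at `w`, and a sum of `k`
points of `W'` whose value under `f` is `k • f w` must consist of copies of `w`.
-/

open Pointwise

theorem forall_eq_of_sum_eq_card_nsmul {ι E M : Type*} [Fintype ι] [AddCommMonoid E]
    [AddCommMonoid M] [PartialOrder M] [IsOrderedCancelAddMonoid M] (f : E →+ M) {w : E}
    {v : ι → E} (hv : ∀ i, v i = w ∨ f w < f (v i)) (hsum : ∑ i, v i = Fintype.card ι • w) :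
    ∀ i, v i = w := by
  by_contra! ⟨j, hj⟩
  have hle : ∀ i ∈ Finset.univ, f w ≤ f (v i) := fun i _ =>
    (hv i).elim (fun h => h ▸ le_rfl) le_of_lt
  have hlt : ∑ _i : ι, f w < ∑ i, f (v i) :=
    Finset.sum_lt_sum hle ⟨j, Finset.mem_univ j, (hv j).resolve_left hj⟩
  rw [Finset.sum_const, Finset.card_univ, ← map_nsmul, ← hsum, map_sum] at hlt
  exact lt_irrefl _ hlt

section ParaboloidTangent

variable {x y : ℝ}

def paraboloidTangent (x y : ℝ) : ℝ × ℝ × ℝ →+ ℝ :=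
  AddMonoidHom.mk' (fun u => u.2.2 - 2 * x * u.1 - 2 * y * u.2.1) fun u v => by
    simp only [Prod.fst_add, Prod.snd_add]
    ring

@[simp]
theorem paraboloidTangent_apply (u : ℝ × ℝ × ℝ) :
    paraboloidTangent x y u = u.2.2 - 2 * x * u.1 - 2 * y * u.2.1 :=
  rfl

theorem eq_or_paraboloidTangent_lt (a b : ℝ) :
    ((a, b, a ^ 2 + b ^ 2) : ℝ × ℝ × ℝ) = (x, y, x ^ 2 + y ^ 2) ∨
      paraboloidTangent x y (x, y, x ^ 2 + y ^ 2) <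
        paraboloidTangent x y (a, b, a ^ 2 + b ^ 2) := by
  by_cases h : a = x ∧ b = y
  · obtain ⟨rfl, rfl⟩ := h
    exact Or.inl rfl
  · have hpos : 0 < (a - x) ^ 2 + (b - y) ^ 2 := by
      rcases not_and_or.mp h with hax | hby
      · exact add_pos_of_pos_of_nonneg (sq_pos_of_ne_zero (sub_ne_zero.mpr hax)) (sq_nonneg _)
      · exact add_pos_of_nonneg_of_pos (sq_nonneg _) (sq_pos_of_ne_zero (sub_ne_zero.mpr hby))
    right
    simp only [paraboloidTangent_apply]
    nlinarith

theorem paraboloidTangent_lt_neg (hx : 0 < x) {a b : ℝ} (ha₀ : 0 ≤ a) (ha : a ≤ 2 * x)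
    (hb₀ : 0 ≤ b) (hb : b ≤ 2 * y) :
    paraboloidTangent x y (x, y, x ^ 2 + y ^ 2) <
      paraboloidTangent x y (-(a, b, a ^ 2 + b ^ 2)) := by
  simp only [paraboloidTangent_apply, Prod.fst_neg, Prod.snd_neg]
  nlinarith [mul_nonneg ha₀ (sub_nonneg.mpr ha), mul_nonneg hb₀ (sub_nonneg.mpr hb)]

theorem paraboloidTangent_lt_xAxis_sub_yAxis (hy : 0 < y) (a : ℝ) {b : ℝ} (hb₀ : 0 ≤ b)
    (hb : b ≤ 2 * y) :
    paraboloidTangent x y (x, y, x ^ 2 + y ^ 2) <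
      paraboloidTangent x y ((a, 0, a ^ 2) - (0, b, b ^ 2)) := by
  simp only [paraboloidTangent_apply, Prod.mk_sub_mk]
  nlinarith [mul_nonneg hb₀ (sub_nonneg.mpr hb), sq_nonneg (a - x)]

theorem paraboloidTangent_lt_yAxis_sub_xAxis (hx : 0 < x) {a : ℝ} (ha₀ : 0 ≤ a) (ha : a ≤ 2 * x)
    (b : ℝ) :
    paraboloidTangent x y (x, y, x ^ 2 + y ^ 2) <
      paraboloidTangent x y ((0, b, b ^ 2) - (a, 0, a ^ 2)) := by
  simp only [paraboloidTangent_apply, Prod.mk_sub_mk]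
  nlinarith [mul_nonneg ha₀ (sub_nonneg.mpr ha), sq_nonneg (b - y)]

end ParaboloidTangent

theorem eq_or_paraboloidTangent_lt_of_mem_setW' {r : ℕ} (hr : 0 < r) {x y : ℤ}
    (hx : (r : ℤ) ≤ 2 * x) (hy : (r : ℤ) ≤ 2 * y) {u : ℝ × ℝ × ℝ} (hu : u ∈ setW' r) :
    u = ((x : ℝ), (y : ℝ), (x : ℝ) ^ 2 + (y : ℝ) ^ 2) ∨
      paraboloidTangent x y ((x : ℝ), (y : ℝ), (x : ℝ) ^ 2 + (y : ℝ) ^ 2) <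
        paraboloidTangent x y u := by
  have hx₀ : (0 : ℝ) < x := by exact_mod_cast (by omega : 0 < x)
  have hy₀ : (0 : ℝ) < y := by exact_mod_cast (by omega : 0 < y)
  have bounds : ∀ {a z : ℤ}, (r : ℤ) ≤ 2 * z → a ≤ r → (r : ℤ) ≤ 2 * a →
      (0 : ℝ) ≤ a ∧ (a : ℝ) ≤ 2 * z := fun {a z} hz ha ha' =>
    ⟨by exact_mod_cast (show 0 ≤ a by omega), by exact_mod_cast (show a ≤ 2 * z by omega)⟩
  rcases hu with ((⟨a, b, -, -, -, -, rfl⟩ | hneg) |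
      ⟨p, ⟨a, ha, ha', rfl⟩, q, ⟨b, hb, hb', rfl⟩, rfl⟩) |
      ⟨p, ⟨b, hb, hb', rfl⟩, q, ⟨a, ha, ha', rfl⟩, rfl⟩
  · exact eq_or_paraboloidTangent_lt _ _
  · obtain ⟨a, b, ha, ha', hb, hb', hab⟩ := hneg
    rw [← neg_neg u, hab]
    obtain ⟨ha₀, ha₂⟩ := bounds hx ha' ha
    obtain ⟨hb₀, hb₂⟩ := bounds hy hb' hb
    exact Or.inr (paraboloidTangent_lt_neg hx₀ ha₀ ha₂ hb₀ hb₂)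
  · obtain ⟨hb₀, hb₂⟩ := bounds hy hb' hb
    exact Or.inr (paraboloidTangent_lt_xAxis_sub_yAxis hy₀ _ hb₀ hb₂)
  · obtain ⟨ha₀, ha₂⟩ := bounds hx ha' ha
    exact Or.inr (paraboloidTangent_lt_yAxis_sub_xAxis hx₀ ha₀ ha₂ _)

theorem stmt3_general (r : ℕ) (hr : 0 < r) (x y : ℤ)
    (hx1 : (r : ℤ) ≤ 2 * x) (hy1 : (r : ℤ) ≤ 2 * y)
    (k : ℕ) (v : Fin k → ℝ × ℝ × ℝ) (hv : ∀ i, v i ∈ setW' r)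
    (hsum : (k : ℝ) • (((x : ℝ), (y : ℝ), (x : ℝ) ^ 2 + (y : ℝ) ^ 2) : ℝ × ℝ × ℝ) =
      ∑ i, v i) :
    ∀ i, v i = ((x : ℝ), (y : ℝ), (x : ℝ) ^ 2 + (y : ℝ) ^ 2) := by
  refine forall_eq_of_sum_eq_card_nsmul (paraboloidTangent x y)
    (fun i => eq_or_paraboloidTangent_lt_of_mem_setW' hr hx1 hy1 (hv i)) ?_
  rw [← hsum, Fintype.card_fin, Nat.cast_smul_eq_nsmul]

/-- If `k·w = v₁ + ⋯ + v_k` with each `vᵢ ∈ W'` and `w = (x, y, x²+y²) ∈ W`,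
then `vᵢ = w` for every `i`. -/
theorem stmt3 (r : ℕ) (hr : 0 < r) (x y : ℤ)
    (hx1 : (r : ℤ) ≤ 2 * x) (hx2 : x ≤ r) (hy1 : (r : ℤ) ≤ 2 * y) (hy2 : y ≤ r)
    (k : ℕ) (v : Fin k → ℝ × ℝ × ℝ) (hv : ∀ i, v i ∈ setW' r)
    (hsum : (k : ℝ) • (((x : ℝ), (y : ℝ), (x : ℝ) ^ 2 + (y : ℝ) ^ 2) : ℝ × ℝ × ℝ) =
      ∑ i, v i) :
    ∀ i, v i = ((x : ℝ), (y : ℝ), (x : ℝ) ^ 2 + (y : ℝ) ^ 2) :=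
  stmt3_general r hr x y hx1 hy1 k v hv hsum
end
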